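/- Let m ≥ 1 be an integer and γ_{-m}, …, γ_m real numbers satisfying the critical equations. Then Σ_{k=-m}^{m} γ_k = 0. -/
import Mathlib


open Real Finset

/-- The first-order optimality (critical) equations for the DRP dispersion error. -/
def DRPCritical (m : ℕ) (γ : ℤ → ℝ) : Prop :=
  ∀ i ∈ Finset.Icc (-(m : ℤ)) (m : ℤ),
    (∫ ζ in (0 : ℝ)..(π / 2),
      (-ζ * Real.sin ((i : ℝ) * ζ) +
        ∑ k ∈ Finset.Icc (-(m : ℤ)) (m : ℤ), γ k * Real.cos (((k : ℝ) - (i : ℝ)) * ζ))) = 0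

theorem stmt_8 (m : ℕ) (hm : 1 ≤ m) (γ : ℤ → ℝ) (hγ : DRPCritical m γ) :
    ∑ k ∈ Finset.Icc (-(m : ℤ)) (m : ℤ), γ k = 0 := by
  set I : Finset ℤ := Finset.Icc (-(m : ℤ)) (m : ℤ) with hI
  set C : ℝ → ℝ := fun ζ => ∑ k ∈ I, γ k * Real.cos ((k : ℝ) * ζ) with hCdef
  set S : ℝ → ℝ := fun ζ => ∑ k ∈ I, γ k * Real.sin ((k : ℝ) * ζ) with hSdef
  have hCcont : Continuous C := by
    apply continuous_finset_sum
    intro k _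
    fun_prop
  have hneg_mem : ∀ i : ℤ, i ∈ I → -i ∈ I := by
    intro i hi
    simp only [hI, Finset.mem_Icc] at hi ⊢
    omega
  -- odd sum vanishes
  have hA : ∀ ζ : ℝ, ∑ i ∈ I, (γ i + γ (-i)) * Real.sin ((i : ℝ) * ζ) = 0 := by
    intro ζ
    have hsymm : ∑ i ∈ I, (γ i + γ (-i)) * Real.sin ((i : ℝ) * ζ)
        = ∑ i ∈ I, -((γ i + γ (-i)) * Real.sin ((i : ℝ) * ζ)) := by
      refine Finset.sum_nbij' (fun i => -i) (fun i => -i) hneg_mem hneg_mem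
        (fun a _ => by ring) (fun a _ => by ring) ?_
      intro a _
      simp only [Int.cast_neg, neg_mul, Real.sin_neg, neg_neg]
      ring
    have := hsymm
    rw [Finset.sum_neg_distrib] at this
    linarith
  -- even sum doubles
  have hB : ∀ ζ : ℝ, ∑ i ∈ I, (γ i + γ (-i)) * Real.cos ((i : ℝ) * ζ) = 2 * C ζ := by
    intro ζ
    have h2 : ∑ i ∈ I, γ (-i) * Real.cos ((i : ℝ) * ζ)
        = ∑ i ∈ I, γ i * Real.cos ((i : ℝ) * ζ) := by
      refine Finset.sum_nbij' (fun i => -i) (fun i => -i) hneg_mem hneg_mem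
        (fun a _ => by ring) (fun a _ => by ring) ?_
      intro a _
      simp only [Int.cast_neg, neg_mul, Real.cos_neg, neg_neg]
    calc ∑ i ∈ I, (γ i + γ (-i)) * Real.cos ((i : ℝ) * ζ)
        = ∑ i ∈ I, γ i * Real.cos ((i : ℝ) * ζ)
          + ∑ i ∈ I, γ (-i) * Real.cos ((i : ℝ) * ζ) := by
          rw [← Finset.sum_add_distrib]; congr 1; ext i; ring
      _ = 2 * C ζ := by rw [h2, hCdef]; ring
  -- pointwise identity
  have hpt : ∀ ζ : ℝ, ∑ i ∈ I, (γ i + γ (-i)) *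
      (-ζ * Real.sin ((i : ℝ) * ζ) +
        ∑ k ∈ I, γ k * Real.cos (((k : ℝ) - (i : ℝ)) * ζ))
      = 2 * C ζ ^ 2 := by
    intro ζ
    have hexp : ∀ i ∈ I, (γ i + γ (-i)) *
        (-ζ * Real.sin ((i : ℝ) * ζ) +
          ∑ k ∈ I, γ k * Real.cos (((k : ℝ) - (i : ℝ)) * ζ))
        = (-ζ) * ((γ i + γ (-i)) * Real.sin ((i : ℝ) * ζ))
          + C ζ * ((γ i + γ (-i)) * Real.cos ((i : ℝ) * ζ))
          + S ζ * ((γ i + γ (-i)) * Real.sin ((i : ℝ) * ζ)) := by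
      intro i _
      have hsum : ∑ k ∈ I, γ k * Real.cos (((k : ℝ) - (i : ℝ)) * ζ)
          = C ζ * Real.cos ((i : ℝ) * ζ) + S ζ * Real.sin ((i : ℝ) * ζ) := by
        have : ∀ k ∈ I, γ k * Real.cos (((k : ℝ) - (i : ℝ)) * ζ)
            = γ k * Real.cos ((k : ℝ) * ζ) * Real.cos ((i : ℝ) * ζ)
              + γ k * Real.sin ((k : ℝ) * ζ) * Real.sin ((i : ℝ) * ζ) := by
          intro k _
          rw [sub_mul, Real.cos_sub]
          ring
        rw [Finset.sum_congr rfl this, Finset.sum_add_distrib, ← Finset.sum_mul,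
          ← Finset.sum_mul, hCdef, hSdef]
      rw [hsum]
      ring
    rw [Finset.sum_congr rfl hexp, Finset.sum_add_distrib, Finset.sum_add_distrib,
      ← Finset.mul_sum, ← Finset.mul_sum, ← Finset.mul_sum, hA, hB]
    ring
  -- integrability
  have hint : ∀ i : ℤ, IntervalIntegrable
      (fun ζ : ℝ => (γ i + γ (-i)) *
        (-ζ * Real.sin ((i : ℝ) * ζ) +
          ∑ k ∈ I, γ k * Real.cos (((k : ℝ) - (i : ℝ)) * ζ))) MeasureTheory.volume 0 (π / 2) := by
    intro i
    apply Continuous.intervalIntegrable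
    apply Continuous.mul continuous_const
    apply Continuous.add (by fun_prop)
    apply continuous_finset_sum
    intro k _
    fun_prop
  -- the key integral identity
  have hkey : (∫ ζ in (0 : ℝ)..(π / 2), 2 * C ζ ^ 2) = 0 := by
    have hsum0 : ∑ i ∈ I, (∫ ζ in (0 : ℝ)..(π / 2), (γ i + γ (-i)) *
        (-ζ * Real.sin ((i : ℝ) * ζ) +
          ∑ k ∈ I, γ k * Real.cos (((k : ℝ) - (i : ℝ)) * ζ))) = 0 := by
      apply Finset.sum_eq_zero
      intro i hi
      rw [intervalIntegral.integral_const_mul, hγ i hi, mul_zero]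
    have hswap := intervalIntegral.integral_finset_sum (μ := MeasureTheory.volume)
      (a := (0 : ℝ)) (b := π / 2) (s := I)
      (f := fun i ζ => (γ i + γ (-i)) *
        (-ζ * Real.sin ((i : ℝ) * ζ) +
          ∑ k ∈ I, γ k * Real.cos (((k : ℝ) - (i : ℝ)) * ζ)))
      (fun i _ => hint i)
    rw [hsum0] at hswap
    rw [intervalIntegral.integral_congr (g := fun ζ => ∑ i ∈ I, (γ i + γ (-i)) *
        (-ζ * Real.sin ((i : ℝ) * ζ) +
          ∑ k ∈ I, γ k * Real.cos (((k : ℝ) - (i : ℝ)) * ζ)))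
      (fun ζ _ => (hpt ζ).symm)]
    simpa using hswap
  have hCsq : (∫ ζ in (0 : ℝ)..(π / 2), C ζ ^ 2) = 0 := by
    rw [intervalIntegral.integral_const_mul] at hkey
    linarith
  have hpi2 : (0 : ℝ) < π / 2 := by positivity
  have hintC : IntervalIntegrable (fun ζ => C ζ ^ 2) MeasureTheory.volume 0 (π / 2) :=
    (hCcont.pow 2).intervalIntegrable _ _
  have hae : (fun ζ => C ζ ^ 2)
      =ᵐ[MeasureTheory.volume.restrict (Set.Ioc 0 (π / 2))] 0 :=
    (intervalIntegral.integral_eq_zero_iff_of_le_of_nonneg_ae hpi2.le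
      (Filter.Eventually.of_forall fun x => sq_nonneg _) hintC).1 hCsq
  have hae' : (fun ζ => C ζ ^ 2)
      =ᵐ[MeasureTheory.volume.restrict (Set.Icc 0 (π / 2))] 0 := by
    rwa [MeasureTheory.restrict_Ioc_eq_restrict_Icc] at hae
  have heq : Set.EqOn (fun ζ => C ζ ^ 2) 0 (Set.Icc 0 (π / 2)) :=
    MeasureTheory.Measure.eqOn_Icc_of_ae_eq MeasureTheory.volume hpi2.ne hae'
      (hCcont.pow 2).continuousOn continuousOn_const
  have h0 : C 0 ^ 2 = 0 := heq (Set.mem_Icc.2 ⟨le_refl 0, hpi2.le⟩)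
  have hC0 : C 0 = 0 := by
    have := sq_eq_zero_iff.1 h0
    exact this
  rw [hCdef] at hC0
  simpa using hC0
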